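/- arXiv:math/9706212 — 2 statements merged into one kernel-verified Lean document; each statement's English description precedes it below -/
import Mathlib

section
/- Let E be an m-dimensional Banach space with a normalized 1-unconditional basis (e_k) and biorthogonal functionals (e_k^*), and let n_1,…,n_m be positive integers with n = ∑_k n_k. Then there exist nonnegative reals α_1,…,α_m and β_1,…,β_m with ‖∑_k α_k e_k^*‖_{E^*} = 1 = ‖∑_k β_k e_k‖_E and ∏_{k=1}^m (α_k β_k / n_k)^{n_k} ≥ n^{-n}. -/
/-!
Maximize `∏ t_k ^ n_k` over the nonnegative part of the unit ball of `E`, a compact convex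
set. The maximizer `β` has positive coordinates and norm one, and differentiating along the segment
from `β` to any other point `t` of the set gives `∑ n_k t_k / β_k ≤ n`. By unconditionality this
says that `α_k = n_k / (n β_k)` has dual norm at most one; it is exactly one since
`∑ α_k β_k = 1`, and `α_k β_k = n_k / n` turns the product inequality into an equality.
-/

open MeasureTheory ENNReal

noncomputable section

/-- `N` is a norm on the real vector space `V`. -/
structure IsNorm {V : Type*} [AddCommGroup V] [Module ℝ V] (N : V → ℝ) : Prop where
  add_le : ∀ x y, N (x + y) ≤ N x + N y
  smul_eq : ∀ (c : ℝ) (x : V), N (c • x) = |c| * N x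
  definite : ∀ x, N x = 0 → x = 0

/-- dual norm of the coordinate functional `t ↦ ∑ a k * t k` relative to `N`. -/
noncomputable def coordDualNorm {m : ℕ} (N : (Fin m → ℝ) → ℝ) (a : Fin m → ℝ) : ℝ :=
  sSup {r | ∃ t, N t ≤ 1 ∧ r = |∑ k, a k * t k|}

namespace IsNorm

section Module

variable {V : Type*} [AddCommGroup V] [Module ℝ V] {N : V → ℝ}

lemma map_zero (h : IsNorm N) : N 0 = 0 := by
  simpa using h.smul_eq 0 0

lemma nonneg (h : IsNorm N) (x : V) : 0 ≤ N x := by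
  have hneg : N (-x) = N x := by simpa using h.smul_eq (-1) x
  have := h.add_le x (-x)
  rw [add_neg_cancel, h.map_zero, hneg] at this
  linarith

lemma pos (h : IsNorm N) {x : V} (hx : x ≠ 0) : 0 < N x :=
  (h.nonneg x).lt_of_ne fun h0 => hx (h.definite x h0.symm)

lemma smul_of_nonneg (h : IsNorm N) {c : ℝ} (hc : 0 ≤ c) (x : V) : N (c • x) = c * N x := by
  rw [h.smul_eq, abs_of_nonneg hc]

lemma convexOn (h : IsNorm N) : ConvexOn ℝ Set.univ N :=
  ⟨convex_univ, fun x _ y _ a b ha hb _ =>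
    calc N (a • x + b • y) ≤ N (a • x) + N (b • y) := h.add_le _ _
      _ = a • N x + b • N y := by rw [h.smul_of_nonneg ha, h.smul_of_nonneg hb]; rfl⟩

end Module

section FiniteDimensional

variable {E : Type*} [NormedAddCommGroup E] [NormedSpace ℝ E] [FiniteDimensional ℝ E]
  {N : E → ℝ}

lemma continuous (h : IsNorm N) : Continuous N :=
  continuousOn_univ.mp (h.convexOn.continuousOn isOpen_univ)

lemma exists_pos_mul_norm_le (h : IsNorm N) : ∃ c > 0, ∀ x, c * ‖x‖ ≤ N x := by
  rcases subsingleton_or_nontrivial E with hE | hE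
  · exact ⟨1, one_pos, fun x => by simpa [Subsingleton.elim x 0] using h.nonneg 0⟩
  obtain ⟨x₀, hx₀, hmin⟩ := (isCompact_sphere (0 : E) 1).exists_isMinOn
    (NormedSpace.sphere_nonempty.mpr zero_le_one) h.continuous.continuousOn
  have hx₀ne : x₀ ≠ 0 := ne_zero_of_mem_unit_sphere ⟨x₀, hx₀⟩
  refine ⟨N x₀, h.pos hx₀ne, fun x => ?_⟩
  rcases eq_or_ne x 0 with rfl | hx
  · simpa using h.nonneg 0
  have hunit : ‖x‖⁻¹ • x ∈ Metric.sphere (0 : E) 1 := by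
    simp [norm_smul, inv_mul_cancel₀ (norm_ne_zero_iff.mpr hx)]
  calc N x₀ * ‖x‖ ≤ N (‖x‖⁻¹ • x) * ‖x‖ := by gcongr; exact hmin hunit
    _ = N x := by
      rw [h.smul_of_nonneg (by positivity), mul_comm, ← mul_assoc,
        mul_inv_cancel₀ (norm_ne_zero_iff.mpr hx), one_mul]

lemma isCompact_setOf_le_one (h : IsNorm N) : IsCompact {x | N x ≤ 1} := by
  obtain ⟨c, hc, hle⟩ := h.exists_pos_mul_norm_le
  refine Metric.isCompact_of_isClosed_isBounded
    (isClosed_le h.continuous continuous_const) ?_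
  refine (Metric.isBounded_closedBall (x := 0) (r := c⁻¹)).subset fun x hx => ?_
  rw [mem_closedBall_zero_iff, ← mul_one c⁻¹, le_inv_mul_iff₀ hc]
  exact (hle x).trans hx

end FiniteDimensional

end IsNorm

lemma HasDerivAt.nonpos_of_forall_le {f : ℝ → ℝ} {f' a b : ℝ} (hab : a < b)
    (hf : HasDerivAt f f' a) (hle : ∀ s ∈ Set.Icc a b, f s ≤ f a) : f' ≤ 0 := by
  have hmax : IsLocalMaxOn f (Set.Icc a b) a :=
    (show IsMaxOn f (Set.Icc a b) a from hle).localize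
  have hcone : b - a ∈ posTangentConeAt (Set.Icc a b) a := by
    apply mem_posTangentConeAt_of_segment_subset
    rw [add_sub_cancel, segment_eq_Icc hab.le]
  have := hmax.hasFDerivWithinAt_nonpos hf.hasFDerivAt.hasFDerivWithinAt hcone
  simp only [ContinuousLinearMap.toSpanSingleton_apply, smul_eq_mul] at this
  exact nonpos_of_mul_nonpos_right this (sub_pos.mpr hab)

lemma hasDerivAt_prod_one_add_mul_pow {ι : Type*} [DecidableEq ι] (s : Finset ι) (n : ι → ℕ)
    (y : ι → ℝ) :
    HasDerivAt (fun r => ∏ k ∈ s, (1 + r * y k) ^ n k) (∑ k ∈ s, n k * y k) 0 := by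
  have hfactor : ∀ k ∈ s, HasDerivAt (fun r => (1 + r * y k) ^ n k) (n k * y k) 0 := by
    intro k _
    simpa using ((hasDerivAt_mul_const (y k)).const_add 1).fun_pow (n k) (x := 0)
  simpa using HasDerivAt.fun_finsetProd hfactor

section Lozanovskii

variable {ι : Type*} {N : (ι → ℝ) → ℝ}

def IsUnconditional (N : (ι → ℝ) → ℝ) : Prop :=
  ∀ ε t : ι → ℝ, (∀ k, |ε k| = 1) → N (ε * t) = N t

def nonnegUnitBall (N : (ι → ℝ) → ℝ) : Set (ι → ℝ) := Set.Ici 0 ∩ {t | N t ≤ 1}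

lemma IsNorm.convex_nonnegUnitBall (h : IsNorm N) : Convex ℝ (nonnegUnitBall N) :=
  (convex_Ici 0).inter (by simpa using h.convexOn.convex_le 1)

lemma IsNorm.zero_mem_nonnegUnitBall (h : IsNorm N) : (0 : ι → ℝ) ∈ nonnegUnitBall N :=
  ⟨Set.self_mem_Ici, h.map_zero.trans_le zero_le_one⟩

lemma IsUnconditional.map_abs (hu : IsUnconditional N) (t : ι → ℝ) : N |t| = N t := by
  have hsign : |t| = (fun k => if 0 ≤ t k then 1 else -1) * t := by
    funext k
    by_cases hk : 0 ≤ t k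
    · simp [hk, abs_of_nonneg hk]
    · simp [hk, abs_of_neg (not_le.mp hk)]
  rw [hsign, hu _ _ fun k => by split_ifs <;> simp]

lemma IsUnconditional.abs_mem_nonnegUnitBall (hu : IsUnconditional N) {t : ι → ℝ}
    (ht : N t ≤ 1) : |t| ∈ nonnegUnitBall N :=
  ⟨Set.mem_Ici.mpr (abs_nonneg t), (hu.map_abs t).trans_le ht⟩

variable [Fintype ι]

lemma IsNorm.isCompact_nonnegUnitBall (h : IsNorm N) : IsCompact (nonnegUnitBall N) :=
  h.isCompact_setOf_le_one.inter_left isClosed_Ici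

lemma IsNorm.exists_isMaxOn_prod_pow (h : IsNorm N) (n : ι → ℕ) :
    ∃ β ∈ nonnegUnitBall N, IsMaxOn (fun t => ∏ k, t k ^ n k) (nonnegUnitBall N) β :=
  h.isCompact_nonnegUnitBall.exists_isMaxOn ⟨0, h.zero_mem_nonnegUnitBall⟩
    (by fun_prop)

section Maximizer

variable {n : ι → ℕ} {β : ι → ℝ}

lemma IsNorm.pos_of_isMaxOn_prod_pow (h : IsNorm N) (hn : ∀ k, 0 < n k)
    (hβ : β ∈ nonnegUnitBall N)
    (hmax : IsMaxOn (fun t => ∏ k, t k ^ n k) (nonnegUnitBall N) β)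
    (k : ι) : 0 < β k := by
  set c := (N 1)⁻¹
  have hN1 : 0 < N 1 := h.pos (Function.ne_iff.mpr ⟨k, one_ne_zero⟩)
  have hc : 0 < c := inv_pos.mpr hN1
  have hcmem : c • (1 : ι → ℝ) ∈ nonnegUnitBall N :=
    ⟨Set.mem_Ici.mpr (smul_nonneg hc.le zero_le_one), (h.smul_of_nonneg hc.le 1).trans_le
      (inv_mul_cancel₀ hN1.ne').le⟩
  have hprod : 0 < ∏ j, β j ^ n j :=
    (Finset.prod_pos fun j _ => pow_pos hc (n j)).trans_le (by simpa using hmax hcmem)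
  refine (hβ.1 k).lt_of_ne fun hβk => hprod.ne' ?_
  exact Finset.prod_eq_zero (Finset.mem_univ k)
    (by rw [← hβk, Pi.zero_apply, zero_pow (hn k).ne'])

lemma IsNorm.eq_one_of_isMaxOn_prod_pow [Nonempty ι] (h : IsNorm N) (hn : ∀ k, 0 < n k)
    (hβ : β ∈ nonnegUnitBall N)
    (hmax : IsMaxOn (fun t => ∏ k, t k ^ n k) (nonnegUnitBall N) β) :
    N β = 1 := by
  have hβpos := h.pos_of_isMaxOn_prod_pow hn hβ hmax
  have hNβ : 0 < N β :=
    h.pos (Function.ne_iff.mpr ⟨Classical.arbitrary ι, (hβpos _).ne'⟩)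
  by_contra hne
  set d := (N β)⁻¹
  have hd : 1 < d := (one_lt_inv₀ hNβ).mpr (hβ.2.lt_of_ne hne)
  have hdmem : d • β ∈ nonnegUnitBall N :=
    ⟨Set.mem_Ici.mpr (smul_nonneg (by positivity) hβ.1),
      ((h.smul_of_nonneg (by positivity) β).trans (inv_mul_cancel₀ hNβ.ne')).le⟩
  have hscale : ∏ k, (d • β) k ^ n k = d ^ (∑ k, n k) * ∏ k, β k ^ n k := by
    simp only [Pi.smul_apply, smul_eq_mul, mul_pow, Finset.prod_mul_distrib,
      Finset.prod_pow_eq_pow_sum]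
  have hprod : 0 < ∏ k, β k ^ n k := Finset.prod_pos fun k _ => pow_pos (hβpos k) _
  have hsum : ∑ k, n k ≠ 0 := (Finset.sum_pos (fun k _ => hn k) Finset.univ_nonempty).ne'
  have hle : ∏ k, (d • β) k ^ n k ≤ ∏ k, β k ^ n k := hmax hdmem
  rw [hscale] at hle
  exact (lt_mul_of_one_lt_left hprod (one_lt_pow₀ hd hsum)).not_ge hle

lemma IsNorm.sum_mul_div_le_of_isMaxOn_prod_pow (h : IsNorm N) (hn : ∀ k, 0 < n k)
    (hβ : β ∈ nonnegUnitBall N)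
    (hmax : IsMaxOn (fun t => ∏ k, t k ^ n k) (nonnegUnitBall N) β)
    {t : ι → ℝ} (ht : t ∈ nonnegUnitBall N) : ∑ k, n k * (t k / β k) ≤ ∑ k, (n k : ℝ) := by
  classical
  have hβpos := h.pos_of_isMaxOn_prod_pow hn hβ hmax
  set y : ι → ℝ := fun k => t k / β k - 1
  have hprod_eq (s : ℝ) : ∏ k, (β + s • (t - β)) k ^ n k =
      (∏ k, β k ^ n k) * ∏ k, (1 + s * y k) ^ n k := by
    rw [← Finset.prod_mul_distrib]
    refine Finset.prod_congr rfl fun k _ => ?_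
    rw [← mul_pow]
    congr 1
    simp only [y, Pi.add_apply, Pi.smul_apply, Pi.sub_apply, smul_eq_mul]
    field_simp [(hβpos k).ne']
  have hprod : 0 < ∏ k, β k ^ n k := Finset.prod_pos fun k _ => pow_pos (hβpos k) _
  have hle (s : ℝ) (hs : s ∈ Set.Icc (0 : ℝ) 1) :
      ∏ k, (1 + s * y k) ^ n k ≤ ∏ k, (1 + 0 * y k) ^ n k := by
    have hG : ∏ k, (β + s • (t - β)) k ^ n k ≤ ∏ k, β k ^ n k :=
      hmax (h.convex_nonnegUnitBall.add_smul_sub_mem hβ ht hs)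
    rw [hprod_eq] at hG
    simpa using le_of_mul_le_mul_left (hG.trans_eq (mul_one _).symm) hprod
  have hderiv := (hasDerivAt_prod_one_add_mul_pow Finset.univ n y).nonpos_of_forall_le
    zero_lt_one hle
  simp only [y, mul_sub, mul_one, Finset.sum_sub_distrib] at hderiv
  linarith

end Maximizer

def dualWeights (n : ι → ℕ) (β : ι → ℝ) : ι → ℝ :=
  fun k => n k / ((∑ j, n j : ℕ) * β k)

lemma dualWeights_nonneg (n : ι → ℕ) {β : ι → ℝ} (hβ : 0 ≤ β) : 0 ≤ dualWeights n β :=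
  fun k => div_nonneg (Nat.cast_nonneg _) (mul_nonneg (Nat.cast_nonneg _) (hβ k))

lemma dualWeights_mul_self (n : ι → ℕ) {β : ι → ℝ} {k : ι} (hβk : β k ≠ 0) :
    dualWeights n β k * β k = n k / (∑ j, n j : ℕ) := by
  rw [dualWeights, div_mul_eq_div_div, div_mul_cancel₀ _ hβk]

end Lozanovskii

lemma coordDualNorm_eq_of_forall_le_of_eq {m : ℕ} {N : (Fin m → ℝ) → ℝ} {a : Fin m → ℝ}
    {c : ℝ} (hle : ∀ t, N t ≤ 1 → |∑ k, a k * t k| ≤ c) {t₀ : Fin m → ℝ} (ht₀ : N t₀ ≤ 1)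
    (heq : |∑ k, a k * t₀ k| = c) : coordDualNorm N a = c :=
  IsGreatest.csSup_eq ⟨⟨t₀, ht₀, heq.symm⟩, by rintro _ ⟨t, ht, rfl⟩; exact hle t ht⟩

lemma IsNorm.coordDualNorm_dualWeights {m : ℕ} [Nonempty (Fin m)] {N : (Fin m → ℝ) → ℝ}
    {n : Fin m → ℕ} {β : Fin m → ℝ} (h : IsNorm N)
    (hu : IsUnconditional N) (hn : ∀ k, 0 < n k) (hβ : β ∈ nonnegUnitBall N)
    (hmax : IsMaxOn (fun t => ∏ k, t k ^ n k) (nonnegUnitBall N) β) :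
    coordDualNorm N (dualWeights n β) = 1 := by
  have hβpos := h.pos_of_isMaxOn_prod_pow hn hβ hmax
  set S : ℝ := ((∑ j, n j : ℕ) : ℝ)
  have hS : 0 < S :=
    Nat.cast_pos.mpr (Finset.sum_pos (fun j _ => hn j) Finset.univ_nonempty)
  refine coordDualNorm_eq_of_forall_le_of_eq (fun t ht => ?_)
    (h.eq_one_of_isMaxOn_prod_pow hn hβ hmax).le ?_
  · have hkey :=
      h.sum_mul_div_le_of_isMaxOn_prod_pow hn hβ hmax (hu.abs_mem_nonnegUnitBall ht)
    calc |∑ k, dualWeights n β k * t k| ≤ ∑ k, dualWeights n β k * |t k| := by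
          refine (Finset.abs_sum_le_sum_abs _ _).trans_eq
            (Finset.sum_congr rfl fun k _ => ?_)
          rw [abs_mul, abs_of_nonneg (dualWeights_nonneg n hβ.1 k)]
      _ = (∑ k, n k * (|t k| / β k)) / S := by
          rw [Finset.sum_div]
          refine Finset.sum_congr rfl fun k _ => ?_
          simp only [dualWeights, S]
          field_simp
      _ ≤ S / S := by
          gcongr
          simpa [S] using hkey
      _ = 1 := div_self hS.ne'
  · simp_rw [dualWeights_mul_self n (hβpos _).ne']
    rw [← Finset.sum_div, ← Nat.cast_sum, div_self hS.ne', abs_one]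

lemma pow_sum_mul_prod_div_sum_pow {ι : Type*} [Fintype ι] (n : ι → ℕ) :
    ((∑ k, n k : ℕ) : ℝ) ^ (∑ k, n k) * ∏ k, ((n k : ℝ) / (∑ j, n j : ℕ)) ^ n k =
      ∏ k, (n k : ℝ) ^ n k := by
  have hpow : ((∑ k, n k : ℕ) : ℝ) ^ (∑ k, n k) ≠ 0 := by
    rcases eq_or_ne (∑ k, n k) 0 with h0 | h0
    · simp [h0]
    · exact pow_ne_zero _ (Nat.cast_ne_zero.mpr h0)
  simp only [div_pow, Finset.prod_div_distrib, Finset.prod_pow_eq_pow_sum]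
  exact mul_div_cancel₀ _ hpow

theorem lozanovskii_weights_general
    (m : ℕ) (hm : 0 < m) (n : Fin m → ℕ) (hn : ∀ k, 0 < n k)
    (NE : (Fin m → ℝ) → ℝ) (hNE : IsNorm NE)
    (hu : ∀ ε t : Fin m → ℝ, (∀ k, |ε k| = 1) → NE (ε * t) = NE t) :
    ∃ α β : Fin m → ℝ, (∀ k, 0 ≤ α k) ∧ (∀ k, 0 ≤ β k) ∧
      coordDualNorm NE α = 1 ∧ NE β = 1 ∧
      (∏ k, (n k : ℝ) ^ (n k : ℕ)) ≤
        ((∑ k, n k : ℕ) : ℝ) ^ (∑ k, n k : ℕ) * ∏ k, (α k * β k) ^ (n k : ℕ) := by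
  have : Nonempty (Fin m) := ⟨⟨0, hm⟩⟩
  obtain ⟨β, hβ, hmax⟩ := hNE.exists_isMaxOn_prod_pow n
  have hβpos := hNE.pos_of_isMaxOn_prod_pow hn hβ hmax
  refine ⟨dualWeights n β, β, dualWeights_nonneg n hβ.1, hβ.1,
    hNE.coordDualNorm_dualWeights hu hn hβ hmax, hNE.eq_one_of_isMaxOn_prod_pow hn hβ hmax, ?_⟩
  simp_rw [dualWeights_mul_self n (hβpos _).ne']
  exact (pow_sum_mul_prod_div_sum_pow n).ge

/-- **Lemma 2.3** (Lozanovskii-type weights). For an `m`-dimensional space `E` with a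
normalized 1-unconditional basis `(e_k)` with biorthogonal functionals `(e_k^*)` and positive
integers `n_1, …, n_m` with `n = ∑ n_k`, there are `α_k, β_k ≥ 0` with
`‖∑ α_k e_k^*‖ = 1 = ‖∑ β_k e_k‖` and `∏ (α_k β_k / n_k)^{n_k} ≥ n^{-n}`
(stated multiplicatively: `∏ n_k^{n_k} ≤ n^n ∏ (α_k β_k)^{n_k}`). -/
theorem lozanovskii_weights
    (m : ℕ) (hm : 0 < m) (n : Fin m → ℕ) (hn : ∀ k, 0 < n k)
    (NE : (Fin m → ℝ) → ℝ) (hNE : IsNorm NE)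
    (hu : ∀ ε t : Fin m → ℝ, (∀ k, |ε k| = 1) → NE (ε * t) = NE t)
    (hnormalized : ∀ k, NE (Pi.single k 1) = 1) :
    ∃ α β : Fin m → ℝ, (∀ k, 0 ≤ α k) ∧ (∀ k, 0 ≤ β k) ∧
      coordDualNorm NE α = 1 ∧ NE β = 1 ∧
      (∏ k, (n k : ℝ) ^ (n k : ℕ)) ≤
        ((∑ k, n k : ℕ) : ℝ) ^ (∑ k, n k : ℕ) * ∏ k, (α k * β k) ^ (n k : ℕ) :=
  lozanovskii_weights_general m hm n hn NE hNE hu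

end
end

section
/- Let 1 ≤ p < ∞, let E be a Banach space with normalized 1-unconditional basis (e_j) and biorthogonal functionals (e_j^*) such that E^* is p-convex with constant K^p(E^*). Let (X_n) be Banach spaces, Z a Banach space, and T : (∑_n X_n)_E → Z a p-summing operator, with restrictions T_n = T|_{X_n}. Then for every m, ‖∑_{j=1}^m π_p(T_j) e_j^*‖_{E^*} ≤ K^p(E^*) π_p(T). -/
open MeasureTheory ENNReal

noncomputable section

/-- the dual norm of a linear functional relative to the norm `N`. -/
noncomputable def dualNorm {V : Type*} [AddCommGroup V] [Module ℝ V] (N : V → ℝ)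
    (f : Module.Dual ℝ V) : ℝ :=
  sInf {c | 0 ≤ c ∧ ∀ x, |f x| ≤ c * N x}

/-- `T` is `p`-summing with constant `C`, relative to norms `NV`, `NW` (`p` finite). -/
def SummingBoundR {V W : Type*} [AddCommGroup V] [Module ℝ V] [AddCommGroup W] [Module ℝ W]
    (p : ℝ) (NV : V → ℝ) (NW : W → ℝ) (T : V →ₗ[ℝ] W) (C : ℝ) : Prop :=
  ∀ (n : ℕ) (x : Fin n → V) (D : ℝ), 0 ≤ D →
    (∀ f : Module.Dual ℝ V, (∀ v, |f v| ≤ NV v) → (∑ i, |f (x i)| ^ p) ^ (1 / p) ≤ D) →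
    (∑ i, NW (T (x i)) ^ p) ^ (1 / p) ≤ C * D

/-- the `p`-summing norm (`p` finite), relative to norms on domain and codomain. -/
noncomputable def piNormR {V W : Type*} [AddCommGroup V] [Module ℝ V] [AddCommGroup W]
    [Module ℝ W] (p : ℝ) (NV : V → ℝ) (NW : W → ℝ) (T : V →ₗ[ℝ] W) : ℝ :=
  sInf {C | 0 ≤ C ∧ SummingBoundR p NV NW T C}

def OpBound {V W : Type*} [AddCommGroup V] [Module ℝ V] [AddCommGroup W] [Module ℝ W]
    (NV : V → ℝ) (NW : W → ℝ) (T : V →ₗ[ℝ] W) (C : ℝ) : Prop :=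
  ∀ v, NW (T v) ≤ C * NV v

noncomputable def opNormRel {V W : Type*} [AddCommGroup V] [Module ℝ V] [AddCommGroup W]
    [Module ℝ W] (NV : V → ℝ) (NW : W → ℝ) (T : V →ₗ[ℝ] W) : ℝ :=
  sInf {C | 0 ≤ C ∧ OpBound NV NW T C}

/-- the `p`-summing norm for `p ∈ [1,∞]`; for `p = ∞` it is the operator norm. -/
noncomputable def piNormE {V W : Type*} [AddCommGroup V] [Module ℝ V] [AddCommGroup W]
    [Module ℝ W] (p : ℝ≥0∞) (NV : V → ℝ) (NW : W → ℝ) (T : V →ₗ[ℝ] W) : ℝ :=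
  if p = ∞ then opNormRel NV NW T else piNormR p.toReal NV NW T

/-- the canonical inclusion `L_∞(μ) → L_q(μ)` for a finite measure. -/
noncomputable def LpIncl {α : Type} [MeasurableSpace α] (μ : Measure α)
    (hfin : IsFiniteMeasure μ) (q : ℝ≥0∞) : Lp ℝ ∞ μ →ₗ[ℝ] Lp ℝ q μ where
  toFun f := ⟨(f : α →ₘ[μ] ℝ), Lp.antitone (μ := μ) (E := ℝ) le_top f.2⟩
  map_add' f g := by ext; simp
  map_smul' c f := Subtype.ext rfl

/-- `q`-integral factorization bound: `T = B ∘ ι ∘ A` through `L_∞(μ) → L_q(μ)`. -/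
def IntegralBound {V W : Type*} [AddCommGroup V] [Module ℝ V] [AddCommGroup W] [Module ℝ W]
    (q : ℝ≥0∞) (NV : V → ℝ) (NW : W → ℝ) (T : V →ₗ[ℝ] W) (C : ℝ) : Prop :=
  ∃ (α : Type) (_mα : MeasurableSpace α) (μ : Measure α) (hμ : IsFiniteMeasure μ)
    (A : V →ₗ[ℝ] Lp ℝ ∞ μ) (B : Lp ℝ q μ →ₗ[ℝ] W) (a b : ℝ),
    0 ≤ a ∧ 0 ≤ b ∧ (∀ v, ‖A v‖ ≤ a * NV v) ∧ (∀ g, NW (B g) ≤ b * ‖g‖) ∧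
    (∀ v, T v = B (LpIncl μ hμ q (A v))) ∧ a * b ≤ C

/-- the `q`-integral norm (for `q = ∞` this is the `γ_∞` norm). -/
noncomputable def iNormE {V W : Type*} [AddCommGroup V] [Module ℝ V] [AddCommGroup W]
    [Module ℝ W] (q : ℝ≥0∞) (NV : V → ℝ) (NW : W → ℝ) (T : V →ₗ[ℝ] W) : ℝ :=
  sInf {C | 0 ≤ C ∧ IntegralBound q NV NW T C}

/-- factorization through `L_r(μ)`. -/
def FactorBound {V W : Type*} [AddCommGroup V] [Module ℝ V] [AddCommGroup W] [Module ℝ W]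
    (r : ℝ≥0∞) (NV : V → ℝ) (NW : W → ℝ) (T : V →ₗ[ℝ] W) (C : ℝ) : Prop :=
  ∃ (α : Type) (_mα : MeasurableSpace α) (μ : Measure α)
    (A : V →ₗ[ℝ] Lp ℝ r μ) (B : Lp ℝ r μ →ₗ[ℝ] W) (a b : ℝ),
    0 ≤ a ∧ 0 ≤ b ∧ (∀ v, ‖A v‖ ≤ a * NV v) ∧ (∀ g, NW (B g) ≤ b * ‖g‖) ∧
    (∀ v, T v = B (A v)) ∧ a * b ≤ C

/-- the `γ_r` norm: factorization through `L_r`. -/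
noncomputable def gammaNorm {V W : Type*} [AddCommGroup V] [Module ℝ V] [AddCommGroup W]
    [Module ℝ W] (r : ℝ≥0∞) (NV : V → ℝ) (NW : W → ℝ) (T : V →ₗ[ℝ] W) : ℝ :=
  sInf {C | 0 ≤ C ∧ FactorBound r NV NW T C}

/-- `X` (with norm `NX`) has the property `GL(p,q)` with constant `C`:
`i_q(T) ≤ C π_p(T^*)` for all bounded finite rank operators into `X`. -/
def HasGLWith {X : Type*} [AddCommGroup X] [Module ℝ X] (p q : ℝ≥0∞) (NX : X → ℝ)
    (C : ℝ) : Prop :=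
  ∀ (Z : Type) [AddCommGroup Z] [Module ℝ Z] (NZ : Z → ℝ), IsNorm NZ →
    ∀ T : Z →ₗ[ℝ] X, (∃ c, 0 ≤ c ∧ OpBound NZ NX T c) →
      Module.Finite ℝ (LinearMap.range T) →
      iNormE q NZ NX T ≤ C * piNormE p (dualNorm NX) (dualNorm NZ) T.dualMap

/-- `X` has the Gordon–Lewis property with constant `K`: `γ₁(T) ≤ K π₁(T)` for all
bounded finite rank operators from `X`. -/
def HasGLFrom {X : Type*} [AddCommGroup X] [Module ℝ X] (NX : X → ℝ) (K : ℝ) : Prop :=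
  ∀ (Z : Type) [AddCommGroup Z] [Module ℝ Z] (NZ : Z → ℝ), IsNorm NZ →
    ∀ T : X →ₗ[ℝ] Z, (∃ c, 0 ≤ c ∧ OpBound NX NZ T c) →
      Module.Finite ℝ (LinearMap.range T) →
      gammaNorm 1 NX NZ T ≤ K * piNormE 1 NX NZ T

/-- scalar `ℓ_p` expression `(∑ |t i|^p)^{1/p}`. -/
noncomputable def scalLpR (p : ℝ) {n : ℕ} (t : Fin n → ℝ) : ℝ := (∑ i, |t i| ^ p) ^ (1 / p)

noncomputable def scalLpE (p : ℝ≥0∞) {n : ℕ} (t : Fin n → ℝ) : ℝ :=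
  if p = ∞ then sSup (Set.range fun i => |t i|) else scalLpR p.toReal t

/-- `a` lies in the unit ball of `ℓ_{p'}^n`, `p'` the conjugate exponent of `p`. -/
noncomputable def dualCond (p : ℝ≥0∞) {n : ℕ} (a : Fin n → ℝ) : Prop :=
  if p = 1 then ∀ i, |a i| ≤ 1
  else if p = ∞ then ∑ i, |a i| ≤ 1
  else ∑ i, |a i| ^ (p.toReal / (p.toReal - 1)) ≤ 1

/-- the set whose supremum is the Krivine element `(∑ |x i|^p)^{1/p}`. -/
def krivSet {X : Type*} [AddCommGroup X] [Module ℝ X] (p : ℝ≥0∞) {n : ℕ}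
    (x : Fin n → X) : Set X :=
  {y | ∃ a : Fin n → ℝ, dualCond p a ∧ y = ∑ i, a i • x i}

/-- volume ratio of (`ℝ^d`-modelled, `d`-dimensional) `(V,N)` relative to `ℓ_p`. -/
noncomputable def vrRel (p : ℝ≥0∞) [Fact (1 ≤ p)] {V : Type} [MeasureSpace V]
    [AddCommGroup V] [Module ℝ V] (N : V → ℝ) (d : ℕ) : ℝ≥0∞ :=
  sInf {v | ∃ T : (lp (fun _ : ℕ => ℝ) p) →ₗ[ℝ] V, (∀ f, N (T f) ≤ ‖f‖) ∧
    v = (volume {y | N y ≤ 1} / volume (T '' {f | ‖f‖ ≤ 1})) ^ ((d : ℝ)⁻¹)}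

/-- volume ratio of `(V,N)` relative to `d`-dimensional subspaces of `ℓ_r`. -/
noncomputable def vrSub (r : ℝ≥0∞) [Fact (1 ≤ r)] {V : Type} [MeasureSpace V]
    [AddCommGroup V] [Module ℝ V] (N : V → ℝ) (d : ℕ) : ℝ≥0∞ :=
  sInf {v | ∃ (F : Submodule ℝ (lp (fun _ : ℕ => ℝ) r)), Module.finrank ℝ F = d ∧
    ∃ T : F →ₗ[ℝ] V, (∀ f : F, ‖f‖ ≤ 1 → N (T f) ≤ 1) ∧
      v = (volume {y | N y ≤ 1} / volume (T '' {f : F | ‖f‖ ≤ 1})) ^ ((d : ℝ)⁻¹)}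

/-! For a functional `f` of norm at most one on `(∑ₙ Xₙ)_E`, the norms `βⱼ = ‖f ∘ ιⱼ‖` satisfy
`‖∑ βⱼ e_j^*‖ ≤ 1` by 1-unconditionality. Gluing almost optimal families for the `T_j`, weighted by
`μⱼ^{1/p}`, gives `∑ μⱼ π_p(T_j)^p ≤ π_p(T)^p sup_β ∑ μⱼ βⱼ^p` for all `μ ≥ 0`; this is a finite
dimensional substitute for Pietsch's theorem, and Hahn–Banach in `ℝ^m` turns it into: up to `ε`,
`π_p(T_j)^p ≤ π_p(T)^p ∑ᵢ θᵢ β_{ij}^p` for a convex combination of such `βᵢ`. The `p`-convexity of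
`E^*` bounds `‖∑ⱼ (∑ᵢ θᵢ β_{ij}^p)^{1/p} e_j^*‖` by `K^p(E^*)`, and the norm of `E^*` is monotone in
the absolute values of the coefficients. -/

open Finset Filter Topology

lemma sum_mul_le_of_forall_lt {J : Type*} (s : Finset J) {t b : J → ℝ} {M : ℝ}
    (h : ∀ a : J → ℝ, (∀ j, a j < b j) → ∑ j ∈ s, t j * a j ≤ M) :
    ∑ j ∈ s, t j * b j ≤ M := by
  have hlim : Tendsto (fun ε : ℝ => ∑ j ∈ s, t j * (b j - ε)) (𝓝[>] 0)
      (𝓝 (∑ j ∈ s, t j * b j)) := by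
    have hcont : Continuous fun ε : ℝ => ∑ j ∈ s, t j * (b j - ε) := by fun_prop
    simpa using (hcont.tendsto 0).mono_left nhdsWithin_le_nhds
  exact le_of_tendsto hlim (eventually_nhdsWithin_of_forall fun ε (hε : 0 < ε) =>
    h _ fun j => by linarith)

lemma le_mul_rpow_add_of_rpow_le {p a C δ η : ℝ} (hp : 1 ≤ p) (ha : 0 ≤ a) (hC : 0 ≤ C)
    (hδ : 0 ≤ δ) (hη : 0 ≤ η) (h : a ^ p ≤ C ^ p * δ + η ^ p) : a ≤ C * δ ^ (1 / p) + η := by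
  have hp0 : 0 < p := by linarith
  calc a = (a ^ p) ^ (1 / p) := by rw [one_div, Real.rpow_rpow_inv ha hp0.ne']
    _ ≤ (C ^ p * δ + η ^ p) ^ (1 / p) := by gcongr
    _ ≤ (C ^ p * δ) ^ (1 / p) + (η ^ p) ^ (1 / p) :=
        Real.rpow_add_le_add_rpow (by positivity) (by positivity) (by positivity)
          (by rw [div_le_one hp0]; exact hp)
    _ = C * δ ^ (1 / p) + η := by
        rw [Real.mul_rpow (by positivity) hδ, one_div, Real.rpow_rpow_inv hC hp0.ne',
          Real.rpow_rpow_inv hη hp0.ne']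

lemma Convex.lowerClosure {𝕜 E : Type*} [Semiring 𝕜] [PartialOrder 𝕜] [AddCommMonoid E]
    [PartialOrder E] [IsOrderedAddMonoid E] [Module 𝕜 E] [PosSMulMono 𝕜 E] {s : Set E}
    (hs : Convex 𝕜 s) : Convex 𝕜 (lowerClosure s : Set E) := by
  rintro x ⟨a, ha, hxa⟩ y ⟨b, hb, hyb⟩ t u ht hu htu
  exact ⟨t • a + u • b, hs ha hb ht hu htu,
    add_le_add (smul_le_smul_of_nonneg_left hxa ht) (smul_le_smul_of_nonneg_left hyb hu)⟩

theorem mem_closure_lowerClosure_convexHull_of_forall_sum_mul_le {J : Type*} [Fintype J]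
    {S : Set (J → ℝ)} {c : J → ℝ}
    (h : ∀ μ : J → ℝ, (∀ j, 0 ≤ μ j) → ∀ u, (∀ b ∈ S, ∑ j, μ j * b j ≤ u) → ∑ j, μ j * c j ≤ u) :
    c ∈ closure (lowerClosure (convexHull ℝ S) : Set (J → ℝ)) := by
  classical
  by_contra hc
  obtain ⟨φ, u, hφL, hu⟩ := geometric_hahn_banach_closed_point
    (convex_convexHull ℝ S).lowerClosure.closure isClosed_closure hc
  let μ : J → ℝ := fun i => φ fun j => if i = j then 1 else 0
  have hφ (y : J → ℝ) : φ y = ∑ j, μ j * y j := by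
    simpa [μ, mul_comm] using LinearMap.pi_apply_eq_sum_univ (φ : (J → ℝ) →ₗ[ℝ] ℝ) y
  have hφS {y b : J → ℝ} (hb : b ∈ S) (hyb : y ≤ b) : φ y < u :=
    hφL y (subset_closure ⟨b, subset_convexHull ℝ S hb, hyb⟩)
  obtain ⟨b₀, hb₀⟩ : S.Nonempty := by
    by_contra hS
    have := h 0 (fun _ => le_rfl) (-1) fun b hb => (hS ⟨b, hb⟩).elim
    norm_num at this
  -- the lower closure is unbounded below in every coordinate, so `φ` is monotone
  have hμ (i : J) : 0 ≤ μ i := by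
    by_contra! hneg
    set t := (u - φ b₀ + 1) / -μ i
    have ht : 0 ≤ t := div_nonneg (by linarith [hφS hb₀ le_rfl]) (by linarith)
    have hle : b₀ - t • (fun j => if i = j then (1 : ℝ) else 0) ≤ b₀ :=
      sub_le_self b₀ (smul_nonneg ht fun j => by
        simp only [Pi.zero_apply]
        split_ifs <;> norm_num)
    have hlt := hφS hb₀ hle
    have htμ : t * μ i = -(u - φ b₀ + 1) := by
      simp only [t]
      field_simp [hneg.ne]
    rw [map_sub, map_smul, smul_eq_mul] at hlt
    linarith
  have := h μ hμ u fun b hb => by rw [← hφ]; exact (hφS hb le_rfl).le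
  rw [← hφ] at this
  linarith

theorem exists_mem_convexHull_le_add_of_forall_sum_mul_le {J : Type*} [Fintype J]
    {S : Set (J → ℝ)} {c : J → ℝ}
    (h : ∀ μ : J → ℝ, (∀ j, 0 ≤ μ j) → ∀ u, (∀ b ∈ S, ∑ j, μ j * b j ≤ u) → ∑ j, μ j * c j ≤ u)
    {ε : ℝ} (hε : 0 < ε) : ∃ δ ∈ convexHull ℝ S, ∀ j, c j ≤ δ j + ε := by
  obtain ⟨y, ⟨δ, hδ, hyδ⟩, hcy⟩ :=
    Metric.mem_closure_iff.1 (mem_closure_lowerClosure_convexHull_of_forall_sum_mul_le h) ε hε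
  refine ⟨δ, hδ, fun j => ?_⟩
  have := (dist_le_pi_dist c y j).trans hcy.le
  rw [Real.dist_eq] at this
  linarith [le_abs_self (c j - y j), hyδ j]

lemma norm_sum_smul_le_of_forall_abs_eq_one {ι E : Type*} [SeminormedAddCommGroup E]
    [NormedSpace ℝ E] (s : Finset ι) (v : ι → E)
    (hsign : ∀ σ : ι → ℝ, (∀ i, |σ i| = 1) → ‖∑ i ∈ s, σ i • v i‖ ≤ ‖∑ i ∈ s, v i‖)
    {r : ι → ℝ} (hr : ∀ i ∈ s, |r i| ≤ 1) : ‖∑ i ∈ s, r i • v i‖ ≤ ‖∑ i ∈ s, v i‖ := by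
  classical
  let L := Fintype.linearCombination ℝ fun i : s => v i
  have hL (ρ : ι → ℝ) : L (fun i => ρ i) = ∑ i ∈ s, ρ i • v i := by
    rw [Fintype.linearCombination_apply]
    exact sum_coe_sort s fun i => ρ i • v i
  have hconv := convexOn_univ_norm.comp_linearMap L
  rw [Set.preimage_univ] at hconv
  -- `r` lies in the cube `[-1, 1] ^ s`, the convex hull of the sign vectors
  have hmem : (fun i : s => r i) ∈ convexHull ℝ (Set.univ.pi fun _ => ({-1, 1} : Set ℝ)) := by
    rw [convexHull_pi]
    intro i _
    rw [convexHull_pair, segment_eq_Icc (by norm_num)]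
    exact abs_le.1 (hr i i.2)
  obtain ⟨σ, hσ, hle⟩ := hconv.exists_ge_of_mem_convexHull (Set.subset_univ _) hmem
  let σ' : ι → ℝ := fun i => if h : i ∈ s then σ ⟨i, h⟩ else 1
  have hσ' (i : ι) : |σ' i| = 1 := by
    by_cases h : i ∈ s
    · have h' := hσ ⟨i, h⟩ trivial
      simp only [Set.mem_insert_iff, Set.mem_singleton_iff] at h'
      rcases h' with h' | h' <;> simp [σ', h, h']
    · simp [σ', h]
  have hLσ : L σ = ∑ i ∈ s, σ' i • v i := by
    rw [← hL]
    congr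
    funext i
    simp [σ', i.2]
  calc ‖∑ i ∈ s, r i • v i‖ = ‖L fun i => r i‖ := by rw [hL]
    _ ≤ ‖L σ‖ := hle
    _ ≤ ‖∑ i ∈ s, v i‖ := hLσ ▸ hsign σ' hσ'

lemma ContinuousLinearMap.exists_norm_le_one_lt_apply {X : Type*} [NormedAddCommGroup X]
    [NormedSpace ℝ X] (g : X →L[ℝ] ℝ) {a : ℝ} (ha : a < ‖g‖) : ∃ w, ‖w‖ ≤ 1 ∧ a < g w := by
  obtain ⟨x, hx, hax⟩ := g.exists_lt_apply_of_lt_opNorm ha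
  rcases le_total 0 (g x) with h | h
  · exact ⟨x, hx.le, by rwa [Real.norm_of_nonneg h] at hax⟩
  · exact ⟨-x, by rw [norm_neg]; exact hx.le, by rwa [map_neg, ← Real.norm_of_nonpos h]⟩

lemma IsNorm.map_zero_s9 {V : Type*} [AddCommGroup V] [Module ℝ V] {N : V → ℝ} (hN : IsNorm N) :
    N 0 = 0 := by
  simpa using hN.smul_eq 0 0

lemma IsNorm.nonneg_s9 {V : Type*} [AddCommGroup V] [Module ℝ V] {N : V → ℝ} (hN : IsNorm N)
    (v : V) : 0 ≤ N v := by
  have hneg : N (-v) = N v := by simpa using hN.smul_eq (-1) v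
  have := hN.add_le v (-v)
  rw [add_neg_cancel, hN.map_zero_s9, hneg] at this
  linarith

lemma sum_rpow_smul {V ι : Type*} [AddCommGroup V] [Module ℝ V] [Fintype ι] {φ : V → ℝ}
    (hφ0 : ∀ v, 0 ≤ φ v) (hφ : ∀ (c : ℝ) v, φ (c • v) = |c| * φ v) (p c : ℝ) (x : ι → V) :
    ∑ i, φ (c • x i) ^ p = |c| ^ p * ∑ i, φ (x i) ^ p := by
  simp_rw [hφ, Real.mul_rpow (abs_nonneg c) (hφ0 _), mul_sum]

section Summing

variable {V W : Type*} [AddCommGroup V] [Module ℝ V] [AddCommGroup W] [Module ℝ W]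
  {p : ℝ} {NV : V → ℝ} {NW : W → ℝ} {T : V →ₗ[ℝ] W} {C : ℝ}

/-- The `p`-th power of the weak `ℓ_p` norm of `x` is at most `b`. -/
def WeakPowSumLE (p : ℝ) (NV : V → ℝ) {ι : Type*} [Fintype ι] (x : ι → V) (b : ℝ) : Prop :=
  ∀ f : Module.Dual ℝ V, (∀ v, |f v| ≤ NV v) → ∑ i, |f (x i)| ^ p ≤ b

lemma piNormR_nonneg : 0 ≤ piNormR p NV NW T :=
  Real.sInf_nonneg fun _ hC => hC.1

lemma summingBoundR_of_forall_weakPowSumLE_one (hp : 0 < p) (hNW : IsNorm NW) (hC : 0 ≤ C)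
    (h : ∀ (n : ℕ) (x : Fin n → V), WeakPowSumLE p NV x 1 → ∑ i, NW (T (x i)) ^ p ≤ C ^ p) :
    SummingBoundR p NV NW T C := by
  intro n x D hD hx
  have hstrong0 : 0 ≤ ∑ i, NW (T (x i)) ^ p :=
    sum_nonneg fun i _ => Real.rpow_nonneg (hNW.nonneg_s9 _) _
  have hlarger : ∀ D' > D, (∑ i, NW (T (x i)) ^ p) ^ (1 / p) ≤ C * D' := by
    intro D' hDD'
    have hD' : 0 < D' := hD.trans_lt hDD'
    have hscaled : WeakPowSumLE p NV (fun i => D'⁻¹ • x i) 1 := by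
      intro f hf
      have hweak : ∑ i, |f (x i)| ^ p ≤ D' ^ p := by
        rw [← Real.rpow_inv_le_iff_of_pos (sum_nonneg fun i _ => by positivity) hD'.le hp,
          ← one_div]
        exact (hx f hf).trans hDD'.le
      have := sum_rpow_smul (fun v => abs_nonneg (f v))
        (fun c v => by rw [map_smul, smul_eq_mul, abs_mul]) p D'⁻¹ x
      rw [this, abs_of_pos (inv_pos.2 hD'), Real.inv_rpow hD'.le, inv_mul_le_iff₀ (by positivity),
        mul_one]
      exact hweak
    have := h n _ hscaled
    rw [show (fun i => NW (T (D'⁻¹ • x i)) ^ p) = fun i => NW (D'⁻¹ • T (x i)) ^ p by simp,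
      sum_rpow_smul hNW.nonneg_s9 hNW.smul_eq, abs_of_pos (inv_pos.2 hD'), Real.inv_rpow hD'.le,
      inv_mul_le_iff₀ (by positivity), ← Real.mul_rpow hD'.le hC] at this
    rw [one_div, Real.rpow_inv_le_iff_of_pos hstrong0 (by positivity) hp, mul_comm]
    exact this
  exact ge_of_tendsto
    (((continuous_const_mul C).tendsto D).mono_left (nhdsWithin_le_nhds (s := Set.Ioi D)))
    (eventually_nhdsWithin_of_forall hlarger)

lemma summingBoundR_piNormR (hp : 0 < p) (hNW : IsNorm NW)
    (h : ∃ C, 0 ≤ C ∧ SummingBoundR p NV NW T C) :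
    SummingBoundR p NV NW T (piNormR p NV NW T) := by
  refine summingBoundR_of_forall_weakPowSumLE_one hp hNW piNormR_nonneg fun n x hx => ?_
  have hle : (∑ i, NW (T (x i)) ^ p) ^ (1 / p) ≤ piNormR p NV NW T := by
    refine le_csInf h fun C' ⟨_, hC'⟩ => ?_
    simpa using hC' n x 1 zero_le_one fun f hf =>
      Real.rpow_le_one (sum_nonneg fun i _ => by positivity) (hx f hf) (by positivity)
  rwa [one_div, Real.rpow_inv_le_iff_of_pos (sum_nonneg fun i _ =>
    Real.rpow_nonneg (hNW.nonneg_s9 _) _) piNormR_nonneg hp] at hle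

lemma exists_weakPowSumLE_one_lt_sum_rpow (hp : 0 < p) (hNW : IsNorm NW) {a : ℝ}
    (ha : a < piNormR p NV NW T ^ p) :
    ∃ (n : ℕ) (x : Fin n → V), WeakPowSumLE p NV x 1 ∧ a < ∑ i, NW (T (x i)) ^ p := by
  by_contra! h
  have ha0 : 0 ≤ a := by simpa using h 0 Fin.elim0 fun f _ => by simp
  have hbound : SummingBoundR p NV NW T (a ^ (1 / p)) :=
    summingBoundR_of_forall_weakPowSumLE_one hp hNW (by positivity) fun n x hx => by
      rw [one_div, Real.rpow_inv_rpow ha0 hp.ne']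
      exact h n x hx
  have hle : piNormR p NV NW T ≤ a ^ (1 / p) :=
    csInf_le ⟨0, fun _ hC => hC.1⟩ ⟨by positivity, hbound⟩
  have := Real.rpow_le_rpow piNormR_nonneg hle hp.le
  rw [one_div, Real.rpow_inv_rpow ha0 hp.ne'] at this
  linarith

lemma SummingBoundR.sum_rpow_le (hT : SummingBoundR p NV NW T C) (hp : 0 < p)
    (hNV : ∀ v, 0 ≤ NV v) (hNW : ∀ w, 0 ≤ NW w) (hC : 0 ≤ C) {ι : Type*} [Fintype ι]
    (x : ι → V) {u : ℝ}
    (hu : ∀ f : Module.Dual ℝ V, (∀ v, |f v| ≤ NV v) → C ^ p * ∑ i, |f (x i)| ^ p ≤ u) :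
    ∑ i, NW (T (x i)) ^ p ≤ u := by
  set y := x ∘ (Fintype.equivFin ι).symm
  have hreindex : ∀ g : V → ℝ, ∑ i, g (x i) = ∑ k, g (y k) := fun g =>
    ((Fintype.equivFin ι).symm.sum_comp fun i => g (x i)).symm
  have hu0 : 0 ≤ u := by simpa [Real.zero_rpow hp.ne'] using hu 0 fun v => by simpa using hNV v
  have hstrong0 : 0 ≤ ∑ k, NW (T (y k)) ^ p := sum_nonneg fun k _ => Real.rpow_nonneg (hNW _) _
  rw [hreindex fun v => NW (T v) ^ p]
  rcases hC.eq_or_lt with rfl | hCpos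
  · have hweak : ∀ f : Module.Dual ℝ V, (∀ v, |f v| ≤ NV v) →
        (∑ k, |f (y k)| ^ p) ^ (1 / p) ≤ (∑ k, NV (y k) ^ p) ^ (1 / p) := fun f hf => by
      gcongr with k
      exact hf _
    have := hT _ y _ (Real.rpow_nonneg (sum_nonneg fun k _ => Real.rpow_nonneg (hNV _) _) _) hweak
    rw [zero_mul, one_div, Real.rpow_inv_le_iff_of_pos hstrong0 le_rfl hp,
      Real.zero_rpow hp.ne'] at this
    linarith
  · have hweak : ∀ f : Module.Dual ℝ V, (∀ v, |f v| ≤ NV v) →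
        (∑ k, |f (y k)| ^ p) ^ (1 / p) ≤ (u / C ^ p) ^ (1 / p) := fun f hf => by
      gcongr
      rw [le_div_iff₀' (by positivity), ← hreindex fun v => |f v| ^ p]
      exact hu f hf
    have hCu : C * (u / C ^ p) ^ (1 / p) = u ^ (1 / p) := by
      rw [Real.div_rpow hu0 (by positivity), ← Real.rpow_mul hC, mul_one_div_cancel hp.ne',
        Real.rpow_one, mul_div_cancel₀ _ hCpos.ne']
    have := hT _ y _ (by positivity) hweak
    rwa [hCu, Real.rpow_le_rpow_iff hstrong0 hu0 (by positivity)] at this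

lemma WeakPowSumLE.sum_abs_rpow_le {ι : Type*} [Fintype ι] {x : ι → V}
    (hx : WeakPowSumLE p NV x 1) {g : Module.Dual ℝ V} {b : ℝ} (hb : 0 ≤ b)
    (hg : ∀ v, |g v| ≤ b * NV v) (hp : 0 < p) : ∑ i, |g (x i)| ^ p ≤ b ^ p := by
  rcases hb.eq_or_lt with rfl | hbpos
  · have hg0 (i : ι) : g (x i) = 0 := by simpa using hg (x i)
    simp [hg0, Real.zero_rpow hp.ne']
  · have := hx (b⁻¹ • g) fun v => by
      rw [LinearMap.smul_apply, smul_eq_mul, abs_mul, abs_inv, abs_of_pos hbpos,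
        inv_mul_le_iff₀ hbpos]
      exact hg v
    simp_rw [LinearMap.smul_apply, smul_eq_mul, abs_mul,
      Real.mul_rpow (abs_nonneg _) (abs_nonneg _), ← mul_sum, abs_inv, abs_of_pos hbpos,
      Real.inv_rpow hbpos.le] at this
    rwa [inv_mul_le_iff₀ (by positivity), mul_one] at this

/-- Glue almost optimal families for the blocks `T ∘ ι j`, weighted by `μ j ^ (1 / p)`, into one
family in `V`; its weak sum is controlled through `B`. -/
theorem sum_mul_piNormR_rpow_le {J : Type*} [Fintype J] {X : J → Type*}
    [∀ j, SeminormedAddCommGroup (X j)] [∀ j, NormedSpace ℝ (X j)] (hp : 0 < p)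
    (hNV : ∀ v, 0 ≤ NV v) (hNW : IsNorm NW) (hT : SummingBoundR p NV NW T C) (hC : 0 ≤ C)
    (ι : ∀ j, X j →ₗ[ℝ] V) (B : Set (J → ℝ))
    (hB : ∀ f : Module.Dual ℝ V, (∀ v, |f v| ≤ NV v) →
      ∃ β ∈ B, ∀ j, 0 ≤ β j ∧ ∀ v, |f (ι j v)| ≤ β j * ‖v‖)
    {μ : J → ℝ} (hμ : ∀ j, 0 ≤ μ j) {u : ℝ} (hu : ∀ β ∈ B, C ^ p * ∑ j, μ j * β j ^ p ≤ u) :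
    ∑ j, μ j * piNormR p (fun x : X j => ‖x‖) NW (T ∘ₗ ι j) ^ p ≤ u := by
  refine sum_mul_le_of_forall_lt _ fun a ha => ?_
  choose n x hx hlt using fun j => exists_weakPowSumLE_one_lt_sum_rpow hp hNW (ha j)
  let y : (Σ j, Fin (n j)) → V := fun ji => ι ji.1 (μ ji.1 ^ (1 / p) • x ji.1 ji.2)
  have hblock : ∀ φ : V → ℝ, (∀ v, 0 ≤ φ v) → (∀ (c : ℝ) v, φ (c • v) = |c| * φ v) →
      ∑ ji, φ (y ji) ^ p = ∑ j, μ j * ∑ i, φ (ι j (x j i)) ^ p := by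
    intro φ hφ0 hφ
    rw [Fintype.sum_sigma]
    refine sum_congr rfl fun j _ => ?_
    simp only [y, map_smul]
    rw [sum_rpow_smul hφ0 hφ, abs_of_nonneg (Real.rpow_nonneg (hμ j) _), one_div,
      Real.rpow_inv_rpow (hμ j) hp.ne']
  have hweak : ∀ f : Module.Dual ℝ V, (∀ v, |f v| ≤ NV v) →
      C ^ p * ∑ ji, |f (y ji)| ^ p ≤ u := by
    intro f hf
    obtain ⟨β, hβB, hβ⟩ := hB f hf
    calc C ^ p * ∑ ji, |f (y ji)| ^ p = C ^ p * ∑ j, μ j * ∑ i, |f (ι j (x j i))| ^ p := by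
          rw [hblock _ (fun v => abs_nonneg _) fun c v => by rw [map_smul, smul_eq_mul, abs_mul]]
      _ ≤ C ^ p * ∑ j, μ j * β j ^ p := by
          refine mul_le_mul_of_nonneg_left (sum_le_sum fun j _ => mul_le_mul_of_nonneg_left
            ((hx j).sum_abs_rpow_le (g := f ∘ₗ ι j) (hβ j).1 (hβ j).2 hp) (hμ j)) (by positivity)
      _ ≤ u := hu β hβB
  calc ∑ j, μ j * a j ≤ ∑ j, μ j * ∑ i, NW (T (ι j (x j i))) ^ p :=
        sum_le_sum fun j _ => mul_le_mul_of_nonneg_left (hlt j).le (hμ j)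
    _ = ∑ ji, NW (T (y ji)) ^ p :=
        (hblock (fun v => NW (T v)) (fun v => hNW.nonneg_s9 _)
          fun c v => by rw [map_smul, hNW.smul_eq]).symm
    _ ≤ u := hT.sum_rpow_le hp hNV hNW.nonneg_s9 hC y hweak

end Summing

structure IsOneUnconditionalBasis {E : Type*} [NormedAddCommGroup E] [NormedSpace ℝ E]
    (e : ℕ → E) (e' : ℕ → E →L[ℝ] ℝ) : Prop where
  biorth : ∀ n k, e' n (e k) = if n = k then (1 : ℝ) else 0
  hasSum : ∀ x : E, HasSum (fun n => e' n x • e n) x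
  norm_eq : ∀ (x y : E) (ε : ℕ → ℝ), (∀ n, |ε n| = 1) →
    HasSum (fun n => (ε n * e' n x) • e n) y → ‖y‖ = ‖x‖

section UnconditionalBasis

variable {E : Type*} [NormedAddCommGroup E] [NormedSpace ℝ E] {e : ℕ → E}
  {e' : ℕ → E →L[ℝ] ℝ}

lemma coord_sum_smul (hbiorth : ∀ n k, e' n (e k) = if n = k then (1 : ℝ) else 0)
    (F : Finset ℕ) (a : ℕ → ℝ) (k : ℕ) :
    e' k (∑ n ∈ F, a n • e n) = if k ∈ F then a k else 0 := by
  simp [hbiorth]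

lemma sum_smul_coord_apply (hbiorth : ∀ n k, e' n (e k) = if n = k then (1 : ℝ) else 0)
    (F : Finset ℕ) (b : ℕ → ℝ) (k : ℕ) :
    (∑ j ∈ F, b j • e' j) (e k) = if k ∈ F then b k else 0 := by
  simp [hbiorth]

lemma norm_sum_sign_mul_smul (he : IsOneUnconditionalBasis e e')
    (F : Finset ℕ) (a σ : ℕ → ℝ) (hσ : ∀ n, |σ n| = 1) :
    ‖∑ n ∈ F, (σ n * a n) • e n‖ = ‖∑ n ∈ F, a n • e n‖ := by
  refine he.norm_eq _ _ σ hσ ?_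
  have hy : ∑ n ∈ F, (σ n * a n) • e n = ∑ n ∈ F, (σ n * e' n (∑ k ∈ F, a k • e k)) • e n :=
    sum_congr rfl fun n hn => by rw [coord_sum_smul he.biorth, if_pos hn]
  rw [hy]
  exact hasSum_sum_of_ne_finset_zero fun n hn => by
    rw [coord_sum_smul he.biorth, if_neg hn, mul_zero, zero_smul]

lemma norm_sum_coord_smul_le (he : IsOneUnconditionalBasis e e')
    (x : E) (F : Finset ℕ) : ‖∑ n ∈ F, e' n x • e n‖ ≤ ‖x‖ := by
  classical
  set P := ∑ n ∈ F, e' n x • e n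
  -- flipping the signs of the coordinates in `F` maps `x` to `x - 2 P`
  have hflip : HasSum (fun n => ((if n ∈ F then -1 else 1) * e' n x) • e n) (x - (2 : ℝ) • P) := by
    have hP : HasSum (fun n => if n ∈ F then e' n x • e n else 0) P := by
      rw [show P = ∑ n ∈ F, if n ∈ F then e' n x • e n else 0 from
        (sum_congr rfl fun n hn => if_pos hn).symm]
      exact hasSum_sum_of_ne_finset_zero fun n hn => if_neg hn
    convert (he.hasSum x).sub (hP.const_smul (2 : ℝ)) using 1
    funext n
    split_ifs <;> module
  have hnorm := he.norm_eq x _ _ (fun n => by split_ifs <;> simp) hflip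
  have : ‖(2 : ℝ) • P‖ ≤ ‖x‖ + ‖x - (2 : ℝ) • P‖ := by
    simpa using norm_sub_le x (x - (2 : ℝ) • P)
  rw [norm_smul, hnorm] at this
  norm_num at this
  linarith

lemma norm_sum_smul_le_of_abs_le (he : IsOneUnconditionalBasis e e')
    (x : E) (F : Finset ℕ) {s : ℕ → ℝ} (hs : ∀ n ∈ F, |s n| ≤ |e' n x|) :
    ‖∑ n ∈ F, s n • e n‖ ≤ ‖x‖ := by
  set r : ℕ → ℝ := fun n => s n / e' n x
  have hsr : ∀ n ∈ F, s n • e n = r n • e' n x • e n := by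
    intro n hn
    rw [smul_smul]
    by_cases h : e' n x = 0
    · have := hs n hn
      simp_all [r]
    · simp [r, h]
  have hr : ∀ n ∈ F, |r n| ≤ 1 := fun n hn => by
    simpa only [r, abs_div] using div_le_one_of_le₀ (hs n hn) (abs_nonneg _)
  rw [sum_congr rfl hsr]
  refine (norm_sum_smul_le_of_forall_abs_eq_one F _ (fun σ hσ => ?_) hr).trans
    (norm_sum_coord_smul_le he x F)
  simp_rw [smul_smul]
  exact (norm_sum_sign_mul_smul he F _ σ hσ).le

lemma norm_sum_smul_coord_le_of_abs_le (he : IsOneUnconditionalBasis e e')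
    (F : Finset ℕ) {a b : ℕ → ℝ} (hab : ∀ j ∈ F, |a j| ≤ b j) :
    ‖∑ j ∈ F, a j • e' j‖ ≤ ‖∑ j ∈ F, b j • e' j‖ := by
  refine ContinuousLinearMap.opNorm_le_bound _ (norm_nonneg _) fun x => ?_
  set y := ∑ j ∈ F, |e' j x| • e j
  have hy : ‖y‖ ≤ ‖x‖ := norm_sum_smul_le_of_abs_le he x F fun n _ => (abs_abs _).le
  have hby : (∑ j ∈ F, b j • e' j) y = ∑ j ∈ F, b j * |e' j x| := by
    rw [_root_.sum_apply]
    refine sum_congr rfl fun j hj => ?_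
    rw [smul_apply, coord_sum_smul he.biorth, if_pos hj, smul_eq_mul]
  calc ‖(∑ j ∈ F, a j • e' j) x‖ ≤ ∑ j ∈ F, |a j| * |e' j x| := by
        simpa [abs_mul] using abs_sum_le_sum_abs (fun j => a j * e' j x) F
    _ ≤ ∑ j ∈ F, b j * |e' j x| :=
        sum_le_sum fun j hj => mul_le_mul_of_nonneg_right (hab j hj) (abs_nonneg _)
    _ = (∑ j ∈ F, b j • e' j) y := hby.symm
    _ ≤ ‖∑ j ∈ F, b j • e' j‖ * ‖y‖ :=
        (Real.le_norm_self _).trans (ContinuousLinearMap.le_opNorm _ _)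
    _ ≤ ‖∑ j ∈ F, b j • e' j‖ * ‖x‖ := by gcongr

variable (e') in
def nonnegDualBall (F : Finset ℕ) : Set (ℕ → ℝ) :=
  {b | (∀ j, 0 ≤ b j) ∧ ‖∑ j ∈ F, b j • e' j‖ ≤ 1}

lemma norm_sum_rpow_inv_smul_le_of_mem_convexHull {p Kp : ℝ} (hp : 0 < p) (hKp : 0 ≤ Kp)
    (hbiorth : ∀ n k, e' n (e k) = if n = k then (1 : ℝ) else 0)
    (hconvexDual : ∀ (k : ℕ) (v : Fin k → (E →L[ℝ] ℝ)) (w : E →L[ℝ] ℝ),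
      (∀ j, w (e j) = scalLpR p fun i => v i (e j)) → ‖w‖ ≤ Kp * scalLpR p fun i => ‖v i‖)
    (F : Finset ℕ) {δ : ℕ → ℝ}
    (hδ : δ ∈ convexHull ℝ ((fun b j => b j ^ p) '' nonnegDualBall e' F)) :
    ‖∑ j ∈ F, δ j ^ (1 / p) • e' j‖ ≤ Kp := by
  obtain ⟨I, _, θ, z, hθ0, hθ1, hz, rfl⟩ := mem_convexHull_iff_exists_fintype.1 hδ
  choose b hb hbz using hz
  let eI := (Fintype.equivFin I).symm
  let v : Fin (Fintype.card I) → E →L[ℝ] ℝ :=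
    fun l => θ (eI l) ^ (1 / p) • ∑ j ∈ F, b (eI l) j • e' j
  have hv (l) : ‖v l‖ ^ p ≤ θ (eI l) := by
    have hθ := hθ0 (eI l)
    calc ‖v l‖ ^ p ≤ (θ (eI l) ^ (1 / p)) ^ p := by
          gcongr
          rw [norm_smul, Real.norm_of_nonneg (by positivity)]
          exact mul_le_of_le_one_right (by positivity) (hb (eI l)).2
      _ = θ (eI l) := by rw [one_div, Real.rpow_inv_rpow hθ hp.ne']
  have hw (k : ℕ) : (∑ j ∈ F, (∑ i, θ i • z i) j ^ (1 / p) • e' j) (e k) =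
      scalLpR p fun l => v l (e k) := by
    simp only [scalLpR, v, smul_apply, sum_smul_coord_apply hbiorth, smul_eq_mul]
    split_ifs with hk
    · congr 1
      rw [Finset.sum_apply, ← eI.sum_comp]
      refine sum_congr rfl fun l _ => ?_
      have hθ := hθ0 (eI l)
      rw [abs_of_nonneg (mul_nonneg (by positivity) ((hb (eI l)).1 k)),
        Real.mul_rpow (by positivity) ((hb (eI l)).1 k), one_div, Real.rpow_inv_rpow hθ hp.ne',
        ← hbz, Pi.smul_apply, smul_eq_mul]
    · simp [Real.zero_rpow hp.ne', Real.zero_rpow (inv_ne_zero hp.ne')]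
  refine (hconvexDual _ v _ hw).trans (mul_le_of_le_one_right hKp ?_)
  refine Real.rpow_le_one (by positivity) ?_ (by positivity)
  calc ∑ l, |‖v l‖| ^ p ≤ ∑ l, θ (eI l) := sum_le_sum fun l _ => by rw [abs_norm]; exact hv l
    _ = 1 := by rw [eI.sum_comp θ, hθ1]

theorem exists_mem_nonnegDualBall_of_abs_le (hnorm1 : ∀ n, ‖e n‖ = 1)
    (he : IsOneUnconditionalBasis e e')
    {V : Type*} [AddCommGroup V] [Module ℝ V] {NV : V → ℝ} {X : ℕ → Type*}
    [∀ n, NormedAddCommGroup (X n)] [∀ n, NormedSpace ℝ (X n)] (ι : ∀ j, X j →ₗ[ℝ] V)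
    (hNV : ∀ (F : Finset ℕ) (v : ∀ j, X j), NV (∑ j ∈ F, ι j (v j)) = ‖∑ j ∈ F, ‖v j‖ • e j‖)
    {f : Module.Dual ℝ V} (hf : ∀ v, |f v| ≤ NV v) :
    ∃ β : ℕ → ℝ, (∀ F, β ∈ nonnegDualBall e' F) ∧ ∀ j v, |f (ι j v)| ≤ β j * ‖v‖ := by
  classical
  have hsingle (j : ℕ) (v : X j) : ‖(f ∘ₗ ι j) v‖ ≤ 1 * ‖v‖ := by
    have := hNV {j} (Pi.single j v)
    simp only [sum_singleton, Pi.single_eq_same, norm_smul, hnorm1, mul_one, norm_norm] at this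
    rw [one_mul, ← this, Real.norm_eq_abs]
    exact hf _
  let g (j : ℕ) : X j →L[ℝ] ℝ := (f ∘ₗ ι j).mkContinuous 1 (hsingle j)
  refine ⟨fun j => ‖g j‖, fun F => ⟨fun j => norm_nonneg _, ?_⟩, fun j v => ?_⟩
  · refine ContinuousLinearMap.opNorm_le_bound _ zero_le_one fun x => ?_
    rw [one_mul]
    calc ‖(∑ j ∈ F, ‖g j‖ • e' j) x‖ ≤ ∑ j ∈ F, |e' j x| * ‖g j‖ := by
          simpa [abs_mul, mul_comm] using abs_sum_le_sum_abs (fun j => ‖g j‖ * e' j x) F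
      _ ≤ ‖x‖ := sum_mul_le_of_forall_lt F fun a ha => ?_
    -- test `f` against the vector with blocks `|e' j x| • w j`, `w j` almost norming `g j`
    choose w hw1 hwa using fun j => (g j).exists_norm_le_one_lt_apply (ha j)
    calc ∑ j ∈ F, |e' j x| * a j ≤ f (∑ j ∈ F, ι j (|e' j x| • w j)) := by
          rw [map_sum]
          exact sum_le_sum fun j _ => by
            rw [map_smul, map_smul, smul_eq_mul]
            exact mul_le_mul_of_nonneg_left (hwa j).le (abs_nonneg _)
      _ ≤ NV (∑ j ∈ F, ι j (|e' j x| • w j)) := (le_abs_self _).trans (hf _)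
      _ = ‖∑ j ∈ F, ‖|e' j x| • w j‖ • e j‖ := hNV F fun j => |e' j x| • w j
      _ ≤ ‖x‖ := norm_sum_smul_le_of_abs_le he x F fun j _ => by
          rw [abs_norm, norm_smul, Real.norm_eq_abs, abs_abs]
          exact mul_le_of_le_one_right (abs_nonneg _) (hw1 j)
  · rw [← Real.norm_eq_abs]
    exact (g j).le_opNorm v

theorem norm_sum_smul_le_of_forall_exists_mem_convexHull {p Kp : ℝ} (hp : 1 ≤ p) (hKp : 0 ≤ Kp)
    (he : IsOneUnconditionalBasis e e')
    (hconvexDual : ∀ (k : ℕ) (v : Fin k → (E →L[ℝ] ℝ)) (w : E →L[ℝ] ℝ),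
      (∀ j, w (e j) = scalLpR p fun i => v i (e j)) → ‖w‖ ≤ Kp * scalLpR p fun i => ‖v i‖)
    (F : Finset ℕ) {c : ℕ → ℝ} (hc : ∀ j, 0 ≤ c j) {C : ℝ} (hC : 0 ≤ C)
    (hdom : ∀ ε > 0, ∃ δ ∈ convexHull ℝ ((fun b j => b j ^ p) '' nonnegDualBall e' F),
      ∀ j ∈ F, c j ^ p ≤ C ^ p * δ j + ε) :
    ‖∑ j ∈ F, c j • e' j‖ ≤ Kp * C := by
  have hp0 : 0 < p := by linarith
  have hη : ∀ η > 0, ‖∑ j ∈ F, c j • e' j‖ ≤ Kp * C + η * ‖∑ j ∈ F, e' j‖ := by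
    intro η hη
    obtain ⟨δ, hδ, hcδ⟩ := hdom (η ^ p) (by positivity)
    have hδ0 : δ ∈ Set.Ici 0 := convexHull_min (by
      rintro _ ⟨b, hb, rfl⟩ j
      exact Real.rpow_nonneg (hb.1 j) _) (convex_Ici 0) hδ
    calc ‖∑ j ∈ F, c j • e' j‖ ≤ ‖∑ j ∈ F, (C * δ j ^ (1 / p) + η) • e' j‖ :=
          norm_sum_smul_coord_le_of_abs_le he F fun j hj => by
            rw [abs_of_nonneg (hc j)]
            exact le_mul_rpow_add_of_rpow_le hp (hc j) hC (hδ0 j) hη.le (hcδ j hj)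
      _ = ‖C • ∑ j ∈ F, δ j ^ (1 / p) • e' j + η • ∑ j ∈ F, e' j‖ := by
          simp_rw [smul_sum, smul_smul, add_smul, sum_add_distrib]
      _ ≤ C * Kp + η * ‖∑ j ∈ F, e' j‖ := by
          refine (norm_add_le _ _).trans ?_
          rw [norm_smul, norm_smul, Real.norm_of_nonneg hC, Real.norm_of_nonneg hη.le]
          gcongr
          exact norm_sum_rpow_inv_smul_le_of_mem_convexHull hp0 hKp he.biorth hconvexDual F hδ
      _ = Kp * C + η * ‖∑ j ∈ F, e' j‖ := by ring
  have hlim : Tendsto (fun η => Kp * C + η * ‖∑ j ∈ F, e' j‖) (𝓝[>] 0) (𝓝 (Kp * C)) := by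
    have hcont : Continuous fun η : ℝ => Kp * C + η * ‖∑ j ∈ F, e' j‖ := by fun_prop
    simpa using (hcont.tendsto 0).mono_left nhdsWithin_le_nhds
  exact ge_of_tendsto hlim (eventually_nhdsWithin_of_forall hη)

theorem exists_mem_convexHull_piNormR_rpow_le {p : ℝ} (hp : 0 < p) (hnorm1 : ∀ n, ‖e n‖ = 1)
    (he : IsOneUnconditionalBasis e e')
    {V W : Type*} [AddCommGroup V] [Module ℝ V] [AddCommGroup W] [Module ℝ W]
    {NV : V → ℝ} {NW : W → ℝ} {T : V →ₗ[ℝ] W} {C : ℝ} (hNV0 : ∀ v, 0 ≤ NV v)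
    (hNW : IsNorm NW) (hT : SummingBoundR p NV NW T C) (hC : 0 ≤ C)
    {X : ℕ → Type*} [∀ n, NormedAddCommGroup (X n)] [∀ n, NormedSpace ℝ (X n)]
    (ι : ∀ j, X j →ₗ[ℝ] V)
    (hNV : ∀ (F : Finset ℕ) (v : ∀ j, X j), NV (∑ j ∈ F, ι j (v j)) = ‖∑ j ∈ F, ‖v j‖ • e j‖)
    (m : ℕ) {ε : ℝ} (hε : 0 < ε) :
    ∃ δ ∈ convexHull ℝ ((fun b j => b j ^ p) '' nonnegDualBall e' (range m)),
      ∀ j ∈ range m, piNormR p (fun x : X j => ‖x‖) NW (T ∘ₗ ι j) ^ p ≤ C ^ p * δ j + ε := by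
  let R : (ℕ → ℝ) →ₗ[ℝ] (Fin m → ℝ) := LinearMap.funLeft ℝ ℝ Fin.val
  let c : Fin m → ℝ := fun j => piNormR p (fun x : X j => ‖x‖) NW (T ∘ₗ ι j) ^ p
  have hdual : ∀ μ : Fin m → ℝ, (∀ j, 0 ≤ μ j) → ∀ u,
      (∀ b ∈ (C ^ p • R) '' ((fun b j => b j ^ p) '' nonnegDualBall e' (range m)),
        ∑ j, μ j * b j ≤ u) → ∑ j, μ j * c j ≤ u := by
    intro μ hμ u hu
    refine sum_mul_piNormR_rpow_le (X := fun j : Fin m => X j) hp hNV0 hNW hT hC (fun j => ι j)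
      (R '' nonnegDualBall e' (range m)) (fun f hf => ?_) hμ ?_
    · obtain ⟨β, hβ, hfβ⟩ := exists_mem_nonnegDualBall_of_abs_le hnorm1 he ι hNV hf
      exact ⟨R β, ⟨β, hβ _, rfl⟩, fun j => ⟨(hβ ∅).1 j, hfβ j⟩⟩
    · rintro _ ⟨β, hβ, rfl⟩
      simpa [R, mul_sum, mul_left_comm] using hu _ ⟨_, ⟨β, hβ, rfl⟩, rfl⟩
  obtain ⟨δ', hδ', hcδ'⟩ := exists_mem_convexHull_le_add_of_forall_sum_mul_le hdual hε
  rw [← LinearMap.image_convexHull] at hδ'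
  obtain ⟨δ, hδ, rfl⟩ := hδ'
  exact ⟨δ, hδ, fun j hj => by simpa [R] using hcδ' ⟨j, mem_range.1 hj⟩⟩

end UnconditionalBasis

lemma norm_tsum_norm_smul_sum_single {E : Type*} [NormedAddCommGroup E] [NormedSpace ℝ E]
    {X : ℕ → Type*} [∀ n, NormedAddCommGroup (X n)] [∀ n, NormedSpace ℝ (X n)]
    {D : Submodule ℝ (∀ n, X n)} {ι : ∀ j, X j →ₗ[ℝ] D}
    (hι : ∀ (j : ℕ) (x : X j), ((ι j x : ∀ n, X n) : ∀ n, X n) = Pi.single j x)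
    (e : ℕ → E) (F : Finset ℕ) (v : ∀ j, X j) :
    ‖∑' n, ‖((∑ j ∈ F, ι j (v j) : D) : ∀ n, X n) n‖ • e n‖ = ‖∑ j ∈ F, ‖v j‖ • e j‖ := by
  classical
  have hcoord (n : ℕ) : ((∑ j ∈ F, ι j (v j) : D) : ∀ n, X n) n = if n ∈ F then v n else 0 := by
    rw [Submodule.coe_sum, Finset.sum_apply]
    simp_rw [hι]
    exact sum_pi_single n v F
  rw [tsum_eq_sum (s := F) fun n hn => by rw [hcoord, if_neg hn, norm_zero, zero_smul]]
  exact congrArg norm (sum_congr rfl fun n hn => by rw [hcoord, if_pos hn])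

theorem pSummingNorm_restrictions_bound_general
    (p : ℝ) (hp : 1 ≤ p)
    (E : Type*) [NormedAddCommGroup E] [NormedSpace ℝ E]
    (e : ℕ → E) (e' : ℕ → (E →L[ℝ] ℝ))
    (hnorm1 : ∀ n, ‖e n‖ = 1)
    (hbiorth : ∀ n k, e' n (e k) = if n = k then (1 : ℝ) else 0)
    (hbasis : ∀ x : E, HasSum (fun n => e' n x • e n) x)
    (huncond : ∀ (x y : E) (ε : ℕ → ℝ), (∀ n, |ε n| = 1) →
      HasSum (fun n => (ε n * e' n x) • e n) y → ‖y‖ = ‖x‖)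
    (Kp : ℝ) (hKp : 0 ≤ Kp)
    (hconvexDual : ∀ (k : ℕ) (v : Fin k → (E →L[ℝ] ℝ)) (w : E →L[ℝ] ℝ),
      (∀ j, w (e j) = scalLpR p fun i => v i (e j)) → ‖w‖ ≤ Kp * scalLpR p fun i => ‖v i‖)
    (X : ℕ → Type) [∀ n, NormedAddCommGroup (X n)] [∀ n, NormedSpace ℝ (X n)]
    (D : Submodule ℝ (∀ n, X n))
    (ι : ∀ j, X j →ₗ[ℝ] D)
    (hι : ∀ (j : ℕ) (x : X j), ((ι j x : ∀ n, X n) : ∀ n, X n) = Pi.single j x)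
    (Z : Type*) [AddCommGroup Z] [Module ℝ Z] (NZ : Z → ℝ) (hNZ : IsNorm NZ)
    (T : D →ₗ[ℝ] Z)
    (hTsumming : ∃ C, 0 ≤ C ∧
      SummingBoundR p (fun x : D => ‖(∑' n, ‖(x : ∀ n, X n) n‖ • e n : E)‖) NZ T C) :
    ∀ m : ℕ,
      ‖∑ j ∈ Finset.range m,
          piNormR p (fun x : X j => ‖x‖) NZ (T.comp (ι j)) • e' j‖ ≤
        Kp * piNormR p (fun x : D => ‖(∑' n, ‖(x : ∀ n, X n) n‖ • e n : E)‖) NZ T := by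
  intro m
  have hp0 : 0 < p := by linarith
  have he : IsOneUnconditionalBasis e e' := ⟨hbiorth, hbasis, huncond⟩
  have hT := summingBoundR_piNormR hp0 hNZ hTsumming
  refine norm_sum_smul_le_of_forall_exists_mem_convexHull hp hKp he hconvexDual _
    (fun j => piNormR_nonneg) piNormR_nonneg fun ε hε => ?_
  exact exists_mem_convexHull_piNormR_rpow_le hp0 hnorm1 he (fun _ => norm_nonneg _) hNZ hT
    piNormR_nonneg ι (norm_tsum_norm_smul_sum_single hι e) m hε

/-- **Theorem 1.3 (first part).** Let `1 ≤ p < ∞`, `E` a Banach space with normalized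
1-unconditional basis `(e_j)` and biorthogonal functionals `(e_j^*)` such that `E^*` is
`p`-convex with constant `K^p(E^*)`.  If `T : (∑ₙ X_n)_E → Z` is `p`-summing with
restrictions `T_j = T|_{X_j}` then for every `m`,
`‖∑_{j<m} π_p(T_j) e_j^*‖ ≤ K^p(E^*) π_p(T)`. -/
theorem pSummingNorm_restrictions_bound
    (p : ℝ) (hp : 1 ≤ p)
    (E : Type*) [NormedAddCommGroup E] [NormedSpace ℝ E] [CompleteSpace E]
    (e : ℕ → E) (e' : ℕ → (E →L[ℝ] ℝ))
    (hnorm1 : ∀ n, ‖e n‖ = 1)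
    (hbiorth : ∀ n k, e' n (e k) = if n = k then (1 : ℝ) else 0)
    (hbasis : ∀ x : E, HasSum (fun n => e' n x • e n) x)
    (huncond : ∀ (x y : E) (ε : ℕ → ℝ), (∀ n, |ε n| = 1) →
      HasSum (fun n => (ε n * e' n x) • e n) y → ‖y‖ = ‖x‖)
    (Kp : ℝ) (hKp : 0 ≤ Kp)
    (hconvexDual : ∀ (k : ℕ) (v : Fin k → (E →L[ℝ] ℝ)) (w : E →L[ℝ] ℝ),
      (∀ j, w (e j) = scalLpR p fun i => v i (e j)) → ‖w‖ ≤ Kp * scalLpR p fun i => ‖v i‖)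
    (X : ℕ → Type) [∀ n, NormedAddCommGroup (X n)] [∀ n, NormedSpace ℝ (X n)]
    [∀ n, CompleteSpace (X n)]
    (D : Submodule ℝ (∀ n, X n))
    (hD : ∀ x : ∀ n, X n, x ∈ D ↔ ∃ s : E, HasSum (fun n => ‖x n‖ • e n) s)
    (ι : ∀ j, X j →ₗ[ℝ] D)
    (hι : ∀ (j : ℕ) (x : X j), ((ι j x : ∀ n, X n) : ∀ n, X n) = Pi.single j x)
    (Z : Type*) [AddCommGroup Z] [Module ℝ Z] (NZ : Z → ℝ) (hNZ : IsNorm NZ)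
    (T : D →ₗ[ℝ] Z)
    (hTsumming : ∃ C, 0 ≤ C ∧
      SummingBoundR p (fun x : D => ‖(∑' n, ‖(x : ∀ n, X n) n‖ • e n : E)‖) NZ T C) :
    ∀ m : ℕ,
      ‖∑ j ∈ Finset.range m,
          piNormR p (fun x : X j => ‖x‖) NZ (T.comp (ι j)) • e' j‖ ≤
        Kp * piNormR p (fun x : D => ‖(∑' n, ‖(x : ∀ n, X n) n‖ • e n : E)‖) NZ T :=
  pSummingNorm_restrictions_bound_general p hp E e e' hnorm1 hbiorth hbasis huncond Kp hKp
    hconvexDual X D ι hι Z NZ hNZ T hTsumming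

end
end
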